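/- For the transport operator Z = ⊕_{k=0}^{N} Z_k on H = ⊕_{k=0}^{N+1} E_k, one has Z Z^* = n_1 P_{φ_{0_1}} ⊕ (⊕_{k=2}^{N+1} P_k) and Z^* Z = n_1 P_0 ⊕ (⊕_{k=1}^{N} |Z_k|), where |Z_k| = Z_k^* Z_k. -/

import Mathlib

noncomputable section

/-- The rank-one operator `|u⟩⟨v|`. -/
noncomputable def outer {E F : Type*} [NormedAddCommGroup E] [InnerProductSpace ℂ E]
    [NormedAddCommGroup F] [InnerProductSpace ℂ F] (u : F) (v : E) : E →ₗ[ℂ] F where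
  toFun x := (inner ℂ v x : ℂ) • u
  map_add' x y := by simp [inner_add_right, add_smul]
  map_smul' c x := by simp [inner_smul_right, smul_smul]

/-!
Write `E_k` for the span of the `k`-th block of the orthonormal basis. Each `Z_k` vanishes on
`E_kᗮ` and takes values in `E_{k+1}`; as the `E_k` are mutually orthogonal, all cross terms
`Z_j Z_k^*` and `Z_j^* Z_k` with `j ≠ k` vanish, so `Z Z^* = ∑ Z_k Z_k^*` and `Z^* Z = ∑ Z_k^* Z_k`.
The Fourier vectors `φ_{a_k}` are orthonormal by orthogonality of the characters of `ℤ/n_k`, hence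
`Z_k Z_k^* = ∑_a |a_{k+1}⟩⟨a_{k+1}| = P_{k+1}` for `k ≥ 1`, while the rank-one map
`Z_0 = √n_1 |φ_{0_1}⟩⟨0_0|` between unit vectors gives the `n_1`-terms.
-/

section Fourier

theorem sum_conj_exp_zpow_mul_exp_zpow (m : ℕ) (a b : Fin m) :
    ∑ c : Fin m,
      starRingEnd ℂ (Complex.exp (2 * Real.pi * Complex.I / m) ^ (-((a.1 * c.1 : ℕ) : ℤ))) *
        Complex.exp (2 * Real.pi * Complex.I / m) ^ (-((b.1 * c.1 : ℕ) : ℤ)) =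
      if a = b then (m : ℂ) else 0 := by
  set ω := Complex.exp (2 * Real.pi * Complex.I / m)
  have hm : m ≠ 0 := (Fin.pos a).ne'
  have hω : IsPrimitiveRoot ω m := Complex.isPrimitiveRoot_exp m hm
  have hω0 : ω ≠ 0 := Complex.exp_ne_zero _
  have hconj : starRingEnd ℂ ω = ω⁻¹ := (RCLike.inv_eq_conj (hω.norm'_eq_one hm)).symm
  set x := ω ^ ((a : ℤ) - b)
  have hterm : ∀ c : Fin m, starRingEnd ℂ (ω ^ (-((a.1 * c.1 : ℕ) : ℤ))) *
      ω ^ (-((b.1 * c.1 : ℕ) : ℤ)) = x ^ (c : ℕ) := fun c => by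
    rw [map_zpow₀, hconj, inv_zpow', neg_neg, ← zpow_add₀ hω0, ← zpow_natCast, ← zpow_mul]
    push_cast
    ring_nf
  simp only [hterm, Fin.sum_univ_eq_sum_range (fun c => x ^ c)]
  split_ifs with hab
  · simp [x, hab]
  · have hx : x ≠ 1 := by
      rw [Ne, hω.zpow_eq_one_iff_dvd]
      intro hdvd
      have := Int.eq_zero_of_abs_lt_dvd hdvd (by rw [abs_lt]; omega)
      exact hab (Fin.ext (by omega))
    have hxm : x ^ m = 1 := by
      rw [← zpow_natCast, ← zpow_mul, mul_comm, zpow_mul, zpow_natCast, hω.pow_eq_one, one_zpow]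
    rw [geom_sum_eq hx, hxm, sub_self, zero_div]

variable {E : Type*} [NormedAddCommGroup E] [InnerProductSpace ℂ E]

def dftFamily {m : ℕ} (f : Fin m → E) (a : Fin m) : E :=
  ((Real.sqrt m : ℂ))⁻¹ • ∑ b : Fin m,
    (Complex.exp (2 * Real.pi * Complex.I / m)) ^ (-((a.1 * b.1 : ℕ) : ℤ)) • f b

theorem Orthonormal.dftFamily {m : ℕ} {f : Fin m → E} (hf : Orthonormal ℂ f) :
    Orthonormal ℂ (dftFamily f) := by
  refine orthonormal_iff_ite.2 fun a b => ?_
  have hm : (m : ℂ) ≠ 0 := Nat.cast_ne_zero.2 (Fin.pos a).ne'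
  have hsqrt : ((Real.sqrt m : ℂ))⁻¹ * ((Real.sqrt m : ℂ))⁻¹ = (m : ℂ)⁻¹ := by
    rw [← mul_inv, ← Complex.ofReal_mul, Real.mul_self_sqrt m.cast_nonneg, Complex.ofReal_natCast]
  rw [_root_.dftFamily, _root_.dftFamily, inner_smul_left, inner_smul_right, hf.inner_sum,
    sum_conj_exp_zpow_mul_exp_zpow, map_inv₀, Complex.conj_ofReal, ← mul_assoc, hsqrt]
  split_ifs <;> simp [hm]

theorem dftFamily_mem_span {m : ℕ} (f : Fin m → E) (a : Fin m) :
    dftFamily f a ∈ Submodule.span ℂ (Set.range f) :=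
  Submodule.smul_mem _ _ <| Submodule.sum_mem _ fun b _ =>
    Submodule.smul_mem _ _ (Submodule.subset_span ⟨b, rfl⟩)

end Fourier

theorem LinearMap.sum_comp_sum_of_comp_eq_zero {R M N P ι : Type*} [CommSemiring R]
    [AddCommMonoid M] [AddCommMonoid N] [AddCommMonoid P] [Module R M] [Module R N] [Module R P]
    {s : Finset ι} {f : ι → N →ₗ[R] P} {g : ι → M →ₗ[R] N}
    (h : ∀ i ∈ s, ∀ j ∈ s, i ≠ j → f i ∘ₗ g j = 0) :
    (∑ i ∈ s, f i) ∘ₗ (∑ j ∈ s, g j) = ∑ i ∈ s, f i ∘ₗ g i := by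
  rw [show (∑ i ∈ s, f i) ∘ₗ (∑ j ∈ s, g j) = ∑ i ∈ s, f i ∘ₗ ∑ j ∈ s, g j from
    map_sum (LinearMap.lcomp R P _) f s]
  refine Finset.sum_congr rfl fun i hi => ?_
  rw [show f i ∘ₗ ∑ j ∈ s, g j = ∑ j ∈ s, f i ∘ₗ g j from
    map_sum (LinearMap.compRight R (f i)) g s]
  exact Finset.sum_eq_single i (fun j hj hji => h i hi j hj hji.symm) (absurd hi)

section Adjoint

variable {𝕜 E F ι : Type*} [RCLike 𝕜] [NormedAddCommGroup E] [InnerProductSpace 𝕜 E]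
  [NormedAddCommGroup F] [InnerProductSpace 𝕜 F] [FiniteDimensional 𝕜 E] [FiniteDimensional 𝕜 F]

theorem LinearMap.range_adjoint_le {V : Submodule 𝕜 E} {T : E →ₗ[𝕜] F}
    (hT : Vᗮ ≤ LinearMap.ker T) : LinearMap.range (LinearMap.adjoint T) ≤ V := by
  rintro _ ⟨y, rfl⟩
  rw [← V.orthogonal_orthogonal, Submodule.mem_orthogonal]
  intro x hx
  rw [LinearMap.adjoint_inner_right, hT hx, inner_zero_left]

theorem LinearMap.orthogonal_le_ker_adjoint {W : Submodule 𝕜 F} {T : E →ₗ[𝕜] F}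
    (hT : LinearMap.range T ≤ W) : Wᗮ ≤ LinearMap.ker (LinearMap.adjoint T) := by
  intro y hy
  refine ext_inner_left 𝕜 fun x => ?_
  rw [LinearMap.adjoint_inner_right, inner_zero_right,
    Submodule.inner_right_of_mem_orthogonal (hT ⟨x, rfl⟩) hy]

theorem LinearMap.comp_adjoint_eq_zero_of_isOrtho {V V' : Submodule 𝕜 E} {S T : E →ₗ[𝕜] F}
    (hS : Vᗮ ≤ LinearMap.ker S) (hT : V'ᗮ ≤ LinearMap.ker T) (hVV' : V ⟂ V') :
    S ∘ₗ LinearMap.adjoint T = 0 :=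
  LinearMap.range_le_ker_iff.1 <|
    (LinearMap.range_adjoint_le hT).trans <| (Submodule.isOrtho_iff_le.1 hVV'.symm).trans hS

theorem LinearMap.adjoint_comp_eq_zero_of_isOrtho {W W' : Submodule 𝕜 F} {S T : E →ₗ[𝕜] F}
    (hS : LinearMap.range S ≤ W) (hT : LinearMap.range T ≤ W') (hWW' : W ⟂ W') :
    LinearMap.adjoint S ∘ₗ T = 0 :=
  LinearMap.range_le_ker_iff.1 <| hT.trans <|
    (Submodule.isOrtho_iff_le.1 hWW'.symm).trans (LinearMap.orthogonal_le_ker_adjoint hS)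

theorem LinearMap.sum_comp_adjoint_sum_of_isOrtho {s : Finset ι} {T : ι → E →ₗ[𝕜] F}
    {V : ι → Submodule 𝕜 E}
    (hT : ∀ i ∈ s, (V i)ᗮ ≤ LinearMap.ker (T i)) (hV : ∀ i ∈ s, ∀ j ∈ s, i ≠ j → V i ⟂ V j) :
    (∑ i ∈ s, T i) ∘ₗ LinearMap.adjoint (∑ i ∈ s, T i) =
      ∑ i ∈ s, T i ∘ₗ LinearMap.adjoint (T i) := by
  rw [map_sum]
  exact LinearMap.sum_comp_sum_of_comp_eq_zero fun i hi j hj hij =>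
    LinearMap.comp_adjoint_eq_zero_of_isOrtho (hT i hi) (hT j hj) (hV i hi j hj hij)

theorem LinearMap.adjoint_sum_comp_sum_of_isOrtho {s : Finset ι} {T : ι → E →ₗ[𝕜] F}
    {W : ι → Submodule 𝕜 F}
    (hT : ∀ i ∈ s, LinearMap.range (T i) ≤ W i) (hW : ∀ i ∈ s, ∀ j ∈ s, i ≠ j → W i ⟂ W j) :
    LinearMap.adjoint (∑ i ∈ s, T i) ∘ₗ (∑ i ∈ s, T i) =
      ∑ i ∈ s, LinearMap.adjoint (T i) ∘ₗ T i := by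
  rw [map_sum]
  exact LinearMap.sum_comp_sum_of_comp_eq_zero fun i hi j hj hij =>
    LinearMap.adjoint_comp_eq_zero_of_isOrtho (hT i hi) (hT j hj) (hW i hi j hj hij)

theorem LinearMap.sum_range_comp_adjoint_of_isOrtho_chain {V : ℕ → Submodule 𝕜 E}
    {T : ℕ → E →ₗ[𝕜] E} {M : ℕ} (hV : ∀ k ≤ M + 1, ∀ j ≤ M + 1, k ≠ j → V k ⟂ V j)
    (hT : ∀ k ≤ M, (V k)ᗮ ≤ LinearMap.ker (T k) ∧ LinearMap.range (T k) ≤ V (k + 1)) :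
    (∑ k ∈ Finset.range (M + 1), T k) ∘ₗ LinearMap.adjoint (∑ k ∈ Finset.range (M + 1), T k) =
        ∑ k ∈ Finset.range (M + 1), T k ∘ₗ LinearMap.adjoint (T k) ∧
      LinearMap.adjoint (∑ k ∈ Finset.range (M + 1), T k) ∘ₗ (∑ k ∈ Finset.range (M + 1), T k) =
        ∑ k ∈ Finset.range (M + 1), LinearMap.adjoint (T k) ∘ₗ T k := by
  have hle : ∀ k ∈ Finset.range (M + 1), k ≤ M := fun k hk =>
    Nat.le_of_lt_succ (Finset.mem_range.1 hk)
  exact ⟨LinearMap.sum_comp_adjoint_sum_of_isOrtho (fun k hk => (hT k (hle k hk)).1)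
      fun k hk j hj => hV k (by grind) j (by grind),
    LinearMap.adjoint_sum_comp_sum_of_isOrtho (fun k hk => (hT k (hle k hk)).2)
      fun k hk j hj hkj => hV _ (by grind) _ (by grind) (by omega)⟩

end Adjoint

section Outer

variable {E F G : Type*} [NormedAddCommGroup E] [InnerProductSpace ℂ E]
  [NormedAddCommGroup F] [InnerProductSpace ℂ F] [NormedAddCommGroup G] [InnerProductSpace ℂ G]

@[simp]
theorem outer_apply (u : F) (v x : E) : outer u v x = (inner ℂ v x : ℂ) • u := rfl

theorem outer_smul_left (c : ℂ) (u : F) (v : E) : outer (c • u) v = c • outer u v := by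
  ext x
  simp [smul_comm c]

theorem outer_comp_outer (u : G) (v w : F) (x : E) :
    outer u v ∘ₗ outer w x = (inner ℂ v w : ℂ) • outer u x := by
  ext y
  simp [smul_smul, mul_comm]

theorem orthogonal_le_ker_outer {V : Submodule ℂ E} (u : F) {v : E} (hv : v ∈ V) :
    Vᗮ ≤ LinearMap.ker (outer u v) := fun x hx => by
  simp [Submodule.inner_right_of_mem_orthogonal hv hx]

theorem range_outer_le {W : Submodule ℂ F} {u : F} (hu : u ∈ W) (v : E) :
    LinearMap.range (outer u v) ≤ W := by
  rintro _ ⟨x, rfl⟩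
  exact W.smul_mem _ hu

theorem orthogonal_le_ker_sum_outer {ι : Type*} [Fintype ι] {V : Submodule ℂ E} (t : ι → F)
    {s : ι → E} (hs : ∀ a, s a ∈ V) : Vᗮ ≤ LinearMap.ker (∑ a, outer (t a) (s a)) := by
  intro x hx
  simp [LinearMap.sum_apply, Submodule.inner_right_of_mem_orthogonal (hs _) hx]

theorem range_sum_outer_le {ι : Type*} [Fintype ι] {W : Submodule ℂ F} {t : ι → F}
    (ht : ∀ a, t a ∈ W) (s : ι → E) : LinearMap.range (∑ a, outer (t a) (s a)) ≤ W := by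
  rintro _ ⟨x, rfl⟩
  simpa [LinearMap.sum_apply] using W.sum_mem fun a _ => W.smul_mem _ (ht a)

variable [FiniteDimensional ℂ E] [FiniteDimensional ℂ F]

theorem adjoint_outer (u : F) (v : E) : LinearMap.adjoint (outer u v) = outer v u := by
  refine ((LinearMap.eq_adjoint_iff _ _).2 fun x y => ?_).symm
  simp only [outer_apply, inner_smul_left, inner_smul_right, inner_conj_symm]
  ring

theorem sum_outer_comp_adjoint_of_orthonormal {ι : Type*} [Fintype ι] (t : ι → F) {s : ι → E}
    (hs : Orthonormal ℂ s) :
    (∑ a, outer (t a) (s a)) ∘ₗ LinearMap.adjoint (∑ a, outer (t a) (s a)) =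
      ∑ a, outer (t a) (t a) := by
  classical
  simp only [map_sum, adjoint_outer]
  rw [LinearMap.sum_comp_sum_of_comp_eq_zero fun a _ b _ hab => by
    rw [outer_comp_outer, orthonormal_iff_ite.1 hs, if_neg hab, zero_smul]]
  simp [outer_comp_outer, hs.1]

theorem ofReal_smul_outer_comp_adjoint (r : ℝ) (u : F) {v : E} (hv : ‖v‖ = 1) :
    ((r : ℂ) • outer u v) ∘ₗ LinearMap.adjoint ((r : ℂ) • outer u v) =
      ((r ^ 2 : ℝ) : ℂ) • outer u u := by
  rw [LinearMap.adjoint.map_smulₛₗ, adjoint_outer, Complex.conj_ofReal, LinearMap.smul_comp,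
    LinearMap.comp_smul, outer_comp_outer, inner_self_eq_norm_sq_to_K, hv, smul_smul]
  simp [sq]

theorem adjoint_ofReal_smul_outer_comp (r : ℝ) {u : F} (hu : ‖u‖ = 1) (v : E) :
    LinearMap.adjoint ((r : ℂ) • outer u v) ∘ₗ ((r : ℂ) • outer u v) =
      ((r ^ 2 : ℝ) : ℂ) • outer v v := by
  rw [LinearMap.adjoint.map_smulₛₗ, adjoint_outer, Complex.conj_ofReal, LinearMap.smul_comp,
    LinearMap.comp_smul, outer_comp_outer, inner_self_eq_norm_sq_to_K, hu, smul_smul]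
  simp [sq]

end Outer

/-- For the transport operator `Z = ⊕_{k=0}^{N} Z_k` on
`H = ⊕_{k=0}^{N+1} E_k`, one has `Z Z^* = n_1 P_{φ_{0_1}} ⊕ (⊕_{k=2}^{N+1} P_k)` and
`Z^* Z = n_1 P_0 ⊕ (⊕_{k=1}^{N} |Z_k|)`, where `|Z_k| = Z_k^* Z_k`. -/
theorem stmt18 {H : Type*} [NormedAddCommGroup H] [InnerProductSpace ℂ H]
    [FiniteDimensional ℂ H]
    (N : ℕ) (hN : 1 ≤ N) (n : ℕ → ℕ)
    (hn0 : n 0 = 1)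
    (hmono : ∀ k, k ≤ N → n (k + 1) ≤ n k)
    (hpos : ∀ k, k ≤ N + 1 → 0 < n k)
    (e : ∀ k : ℕ, Fin (n k) → H)
    (honb : ∀ (k k' : ℕ), k ≤ N + 1 → k' ≤ N + 1 →
      ∀ (a : Fin (n k)) (a' : Fin (n k')),
        (inner ℂ (e k a) (e k' a') : ℂ) =
          if k = k' ∧ (a : ℕ) = (a' : ℕ) then 1 else 0)
    (φ : ∀ k : ℕ, Fin (n k) → H)
    (hφ : ∀ k, k ≤ N + 1 → ∀ a : Fin (n k),
      φ k a = ((Real.sqrt (n k) : ℂ))⁻¹ • ∑ b : Fin (n k),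
        (Complex.exp (2 * Real.pi * Complex.I / (n k))) ^
          (-((a.1 * b.1 : ℕ) : ℤ)) • e k b)
    (Zk : ℕ → (H →ₗ[ℂ] H))
    (hZ0 : Zk 0 = (Real.sqrt (n 1) : ℂ) •
      outer (φ 1 ⟨0, hpos 1 (by omega)⟩) (e 0 ⟨0, hpos 0 (by omega)⟩))
    (hZk : ∀ k, 1 ≤ k → ∀ hk : k ≤ N, Zk k = ∑ a : Fin (n (k + 1)),
      outer (e (k + 1) a) (φ k ⟨a.1, lt_of_lt_of_le a.2 (hmono k hk)⟩))
    (Z : H →ₗ[ℂ] H) (hZ : Z = ∑ k ∈ Finset.range (N + 1), Zk k)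
    (P : ℕ → (H →ₗ[ℂ] H))
    (hP : ∀ k, P k = ∑ a : Fin (n k), outer (e k a) (e k a)) :
    Z ∘ₗ LinearMap.adjoint Z =
      (n 1 : ℂ) • outer (φ 1 ⟨0, hpos 1 (by omega)⟩) (φ 1 ⟨0, hpos 1 (by omega)⟩) +
        ∑ k ∈ Finset.Icc 2 (N + 1), P k ∧
    LinearMap.adjoint Z ∘ₗ Z =
      (n 1 : ℂ) • P 0 +
        ∑ k ∈ Finset.Icc 1 N, (LinearMap.adjoint (Zk k) ∘ₗ Zk k) := by
  have he : ∀ k ≤ N + 1, Orthonormal ℂ (e k) := fun k hk =>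
    orthonormal_iff_ite.2 fun a b => by simpa [Fin.val_inj] using honb k k hk hk a b
  replace hφ : ∀ k ≤ N + 1, φ k = dftFamily (e k) := fun k hk => funext (hφ k hk)
  have hφon : ∀ k ≤ N + 1, Orthonormal ℂ (φ k) := fun k hk => hφ k hk ▸ (he k hk).dftFamily
  -- `V k` is the block `E_k`
  set V : ℕ → Submodule ℂ H := fun k => Submodule.span ℂ (Set.range (e k))
  have hV : ∀ k ≤ N + 1, ∀ j ≤ N + 1, k ≠ j → V k ⟂ V j := fun k hk j hj hkj =>
    Submodule.isOrtho_span.2 <| by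
      rintro _ ⟨a, rfl⟩ _ ⟨b, rfl⟩
      simp [honb k j hk hj, hkj]
  have hφV : ∀ k ≤ N + 1, ∀ a, φ k a ∈ V k := fun k hk a => hφ k hk ▸ dftFamily_mem_span _ _
  have hmaps : ∀ k ≤ N, (V k)ᗮ ≤ LinearMap.ker (Zk k) ∧ LinearMap.range (Zk k) ≤ V (k + 1) := by
    rintro (_ | k) hk
    · rw [hZ0, ← outer_smul_left]
      exact ⟨orthogonal_le_ker_outer _ (Submodule.subset_span (Set.mem_range_self _)),
        range_outer_le ((V 1).smul_mem _ (hφV 1 (by omega) _)) _⟩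
    · rw [hZk (k + 1) (by omega) hk]
      exact ⟨orthogonal_le_ker_sum_outer _ fun _ => hφV _ (by omega) _,
        range_sum_outer_le (fun _ => Submodule.subset_span (Set.mem_range_self _)) _⟩
  obtain ⟨hZZ, hZZ'⟩ := LinearMap.sum_range_comp_adjoint_of_isOrtho_chain hV hmaps
  have hrange : Finset.range (N + 1) = insert 0 (Finset.Icc 1 N) := by
    ext k; simp only [Finset.mem_range, Finset.mem_insert, Finset.mem_Icc]; omega
  rw [hZ, hZZ, hZZ', hrange, Finset.sum_insert (by simp), Finset.sum_insert (by simp)]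
  refine ⟨congr_arg₂ (· + ·) ?_ ?_, congr_arg₂ (· + ·) ?_ rfl⟩
  · rw [hZ0, ofReal_smul_outer_comp_adjoint _ _ ((he 0 (by omega)).1 _),
      Real.sq_sqrt (Nat.cast_nonneg _), Complex.ofReal_natCast]
  · rw [← Finset.map_add_right_Icc 1 N 1, Finset.sum_map]
    refine Finset.sum_congr rfl fun k hk => ?_
    obtain ⟨hk1, hkN⟩ := Finset.mem_Icc.1 hk
    rw [hZk k hk1 hkN]
    exact (sum_outer_comp_adjoint_of_orthonormal _ <|
      (hφon k (by omega)).comp _ (Fin.castLE_injective (hmono k hkN))).trans (hP _).symm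
  · have hP0 : P 0 = outer (e 0 ⟨0, hpos 0 (by omega)⟩) (e 0 ⟨0, hpos 0 (by omega)⟩) := by
      rw [hP, Fintype.sum_eq_single _ fun a ha => absurd (Fin.ext (by omega)) ha]
    rw [hZ0, adjoint_ofReal_smul_outer_comp _ ((hφon 1 (by omega)).1 _),
      Real.sq_sqrt (Nat.cast_nonneg _), Complex.ofReal_natCast, hP0]
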